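/- In the deep ANN setting with locally Lipschitz activation $\sigma$, let $\ell = (\ell_0,\dots,\ell_L)$ be an architecture with $\ell_0 = d_I$, $\ell_L = d_O$, and let $\theta \in \mathbb{R}^{\mathfrak{d}_\ell}$ satisfy $0 \in \partial_C \mathcal{L}_\ell(\theta)$ (Clarke subdifferential). Then $\mathcal{L}_\ell(\theta) \le \inf_{\xi \in \mathbb{R}^{d_O}} \int_{[a,b]^{d_I}} \|f(x) - \xi\|^2\,\mu(dx)$, i.e., the risk at every Clarke critical point is at most the best constant approximation error. -/

import Mathlib

open MeasureTheory Filter Topology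

/-- Parameter space of a fully connected feedforward ANN with `L` affine layers and
layer dimensions `ℓ 0, ℓ 1, …, ℓ L`: for each layer a weight matrix and a bias vector. -/
abbrev Params (L : ℕ) (ℓ : ℕ → ℕ) : Type :=
  (k : Fin L) → ((Fin (ℓ (k.1 + 1)) → Fin (ℓ k.1) → ℝ) × (Fin (ℓ (k.1 + 1)) → ℝ))

noncomputable def weightOf {L : ℕ} {ℓ : ℕ → ℕ} (θ : Params L ℓ) (k : ℕ) :
    Fin (ℓ (k + 1)) → Fin (ℓ k) → ℝ :=
  if h : k < L then (θ ⟨k, h⟩).1 else fun _ _ => 0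

noncomputable def biasOf {L : ℕ} {ℓ : ℕ → ℕ} (θ : Params L ℓ) (k : ℕ) :
    Fin (ℓ (k + 1)) → ℝ :=
  if h : k < L then (θ ⟨k, h⟩).2 else fun _ => 0

/-- `layer σ θ x k` is the output of the `k`-th layer (before activation) of the
ANN with parameters `θ` applied to input `x`; the activation applied to the
`k`-th hidden layer is `σ k`. -/
noncomputable def layer {L : ℕ} {ℓ : ℕ → ℕ} (σ : ℕ → ℝ → ℝ) (θ : Params L ℓ)
    (x : Fin (ℓ 0) → ℝ) : (k : ℕ) → Fin (ℓ k) → ℝ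
  | 0 => x
  | (k + 1) => fun i => biasOf θ k i + ∑ j, weightOf θ k i j *
      (if k = 0 then layer σ θ x k j else σ k (layer σ θ x k j))

/-- The `L²`-risk of the ANN with parameters `θ` against the target `f` over `[a,b]^{ℓ 0}`. -/
noncomputable def drisk (L : ℕ) (ℓ : ℕ → ℕ) (a b : ℝ) (σ : ℕ → ℝ → ℝ)
    (μ : Measure (Fin (ℓ 0) → ℝ)) (f : (Fin (ℓ 0) → ℝ) → (Fin (ℓ L) → ℝ))
    (θ : Params L ℓ) : ℝ :=
  ∫ x in Set.Icc (fun _ => a) (fun _ => b), (∑ i, (layer σ θ x L i - f x i) ^ 2) ∂μ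

/-- The Clarke subdifferential (as a set of continuous linear functionals) of a locally
Lipschitz function on a normed space: the convex hull of all limits of derivatives
along sequences of differentiability points converging to `x`. -/
noncomputable def clarkeSubdiff {E : Type*} [NormedAddCommGroup E] [NormedSpace ℝ E]
    (f : E → ℝ) (x : E) : Set (E →L[ℝ] ℝ) :=
  convexHull ℝ {y | ∃ z : ℕ → E, (∀ k, DifferentiableAt ℝ f (z k)) ∧
    Tendsto z atTop (𝓝 x) ∧ Tendsto (fun k => fderiv ℝ f (z k)) atTop (𝓝 y)}

/-! ### Auxiliary lemmas -/

lemma layer_cont (σ : ℕ → ℝ → ℝ) (hσ : ∀ n, Continuous (σ n)) {L : ℕ} {ℓ : ℕ → ℕ} :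
    ∀ (k : ℕ) (i : Fin (ℓ k)),
      Continuous (fun p : Params L ℓ × (Fin (ℓ 0) → ℝ) => layer σ p.1 p.2 k i)
  | 0, i => by
      show Continuous (fun p : Params L ℓ × (Fin (ℓ 0) → ℝ) => p.2 i)
      exact (continuous_apply i).comp continuous_snd
  | (k+1), i => by
      have hw : ∀ j : Fin (ℓ k), Continuous
          (fun p : Params L ℓ × (Fin (ℓ 0) → ℝ) => weightOf p.1 k i j) := by
        intro j
        unfold weightOf
        by_cases h : k < L
        · simp only [dif_pos h]
          exact ((continuous_apply j).comp ((continuous_apply i).comp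
            (continuous_fst.comp ((continuous_apply (⟨k, h⟩ : Fin L)).comp continuous_fst))))
        · simp only [dif_neg h]; exact continuous_const
      have hb : Continuous (fun p : Params L ℓ × (Fin (ℓ 0) → ℝ) => biasOf p.1 k i) := by
        unfold biasOf
        by_cases h : k < L
        · simp only [dif_pos h]
          exact (continuous_apply i).comp
            (continuous_snd.comp ((continuous_apply (⟨k, h⟩ : Fin L)).comp continuous_fst))
        · simp only [dif_neg h]; exact continuous_const
      show Continuous (fun p : Params L ℓ × (Fin (ℓ 0) → ℝ) => biasOf p.1 k i +
        ∑ j, weightOf p.1 k i j *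
          (if k = 0 then layer σ p.1 p.2 k j else σ k (layer σ p.1 p.2 k j)))
      refine hb.add (continuous_finset_sum _ fun j _ => (hw j).mul ?_)
      by_cases hk : k = 0
      · simpa [hk] using layer_cont σ hσ k j
      · simp only [hk, if_false]
        exact (hσ k).comp (layer_cont σ hσ k j)

lemma layer_cont_x (σ : ℕ → ℝ → ℝ) (hσ : ∀ n, Continuous (σ n)) {L : ℕ} {ℓ : ℕ → ℕ}
    (θ : Params L ℓ) (k : ℕ) (i : Fin (ℓ k)) :
    Continuous (fun x : Fin (ℓ 0) → ℝ => layer σ θ x k i) :=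
  (layer_cont σ hσ k i).comp (Continuous.prodMk continuous_const continuous_id)

lemma sum_sq_sub_le {n : ℕ} (u v : Fin n → ℝ) :
    ∑ i, (u i - v i) ^ 2 ≤ 2 * ∑ i, (u i) ^ 2 + 2 * ∑ i, (v i) ^ 2 := by
  have h : ∀ i : Fin n, (u i - v i) ^ 2 ≤ 2 * (u i) ^ 2 + 2 * (v i) ^ 2 := by
    intro i; nlinarith [sq_nonneg (u i + v i)]
  calc ∑ i, (u i - v i) ^ 2 ≤ ∑ i, (2 * (u i) ^ 2 + 2 * (v i) ^ 2) :=
        Finset.sum_le_sum fun i _ => h i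
    _ = 2 * ∑ i, (u i) ^ 2 + 2 * ∑ i, (v i) ^ 2 := by
        rw [Finset.sum_add_distrib, Finset.mul_sum, Finset.mul_sum]

lemma integrand_aesm {L : ℕ} {ℓ : ℕ → ℕ} (σ : ℕ → ℝ → ℝ) (hσ : ∀ n, Continuous (σ n))
    (f : (Fin (ℓ 0) → ℝ) → (Fin (ℓ L) → ℝ)) (hf : Measurable f)
    (θ : Params L ℓ) (ν : Measure (Fin (ℓ 0) → ℝ)) :
    AEStronglyMeasurable (fun x => ∑ i, (layer σ θ x L i - f x i) ^ 2) ν := by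
  refine (Finset.measurable_sum _ fun i _ => ?_).aestronglyMeasurable
  exact (((layer_cont_x σ hσ θ L i).measurable.sub
    ((measurable_pi_apply i).comp hf)).pow_const 2)

lemma risk_integrable {L : ℕ} {ℓ : ℕ → ℕ} {a b : ℝ} (σ : ℕ → ℝ → ℝ)
    (hσ : ∀ n, Continuous (σ n)) {μ : Measure (Fin (ℓ 0) → ℝ)} [IsFiniteMeasure μ]
    {f : (Fin (ℓ 0) → ℝ) → (Fin (ℓ L) → ℝ)} (hf : Measurable f)
    (hf2 : Integrable (fun x => ∑ i, (f x i) ^ 2)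
      (μ.restrict (Set.Icc (fun _ => a) (fun _ => b))))
    (θ : Params L ℓ) :
    Integrable (fun x => ∑ i, (layer σ θ x L i - f x i) ^ 2)
      (μ.restrict (Set.Icc (fun _ => a) (fun _ => b))) := by
  set cube : Set (Fin (ℓ 0) → ℝ) := Set.Icc (fun _ => a) (fun _ => b) with hcube
  have hcompact : IsCompact cube := isCompact_Icc
  have hg : Continuous (fun x => ∑ i, (layer σ θ x L i) ^ 2) :=
    continuous_finset_sum _ fun i _ => (layer_cont_x σ hσ θ L i).pow 2
  obtain ⟨C, hC⟩ := hcompact.exists_bound_of_continuousOn hg.continuousOn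
  refine Integrable.mono' ((integrable_const (2 * C)).add (hf2.const_mul 2))
    (integrand_aesm σ hσ f hf θ _) ?_
  filter_upwards [ae_restrict_mem measurableSet_Icc] with x hx
  have h1 : ∑ i, (layer σ θ x L i - f x i) ^ 2 ≤
      2 * ∑ i, (layer σ θ x L i) ^ 2 + 2 * ∑ i, (f x i) ^ 2 :=
    sum_sq_sub_le _ _
  have h2 : ∑ i, (layer σ θ x L i) ^ 2 ≤ C :=
    le_trans (le_abs_self _) (hC x hx)
  have h3 : (0:ℝ) ≤ ∑ i, (layer σ θ x L i - f x i) ^ 2 :=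
    Finset.sum_nonneg fun i _ => sq_nonneg _
  rw [Real.norm_eq_abs, abs_of_nonneg h3]
  simp only [Pi.add_apply]
  linarith

lemma risk_tendsto {L : ℕ} {ℓ : ℕ → ℕ} {a b : ℝ} (σ : ℕ → ℝ → ℝ)
    (hσ : ∀ n, Continuous (σ n)) {μ : Measure (Fin (ℓ 0) → ℝ)} [IsFiniteMeasure μ]
    {f : (Fin (ℓ 0) → ℝ) → (Fin (ℓ L) → ℝ)} (hf : Measurable f)
    (hf2 : Integrable (fun x => ∑ i, (f x i) ^ 2)
      (μ.restrict (Set.Icc (fun _ => a) (fun _ => b))))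
    (θ : Params L ℓ) (z : ℕ → Params L ℓ) (hz : Tendsto z atTop (𝓝 θ)) :
    Tendsto (fun n => drisk L ℓ a b σ μ f (z n)) atTop (𝓝 (drisk L ℓ a b σ μ f θ)) := by
  set cube : Set (Fin (ℓ 0) → ℝ) := Set.Icc (fun _ => a) (fun _ => b) with hcube
  have hcompact : IsCompact ((Metric.closedBall θ 1) ×ˢ cube) :=
    (isCompact_closedBall θ 1).prod isCompact_Icc
  have hg : Continuous (fun p : Params L ℓ × (Fin (ℓ 0) → ℝ) =>
      ∑ i, (layer σ p.1 p.2 L i) ^ 2) :=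
    continuous_finset_sum _ fun i _ => (layer_cont σ hσ L i).pow 2
  obtain ⟨C, hC⟩ := hcompact.exists_bound_of_continuousOn hg.continuousOn
  refine tendsto_integral_filter_of_dominated_convergence
    (fun x => 2 * C + 2 * ∑ i, (f x i) ^ 2)
    (Eventually.of_forall fun n => integrand_aesm σ hσ f hf (z n) _) ?_
    ((integrable_const (2 * C)).add (hf2.const_mul 2)) ?_
  · filter_upwards [hz (Metric.closedBall_mem_nhds θ one_pos)] with n hn
    filter_upwards [ae_restrict_mem measurableSet_Icc] with x hx
    have h1 := sum_sq_sub_le (fun i => layer σ (z n) x L i) (fun i => f x i)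
    have h2 : ∑ i, (layer σ (z n) x L i) ^ 2 ≤ C :=
      le_trans (le_abs_self _) (hC (z n, x) ⟨hn, hx⟩)
    have h3 : (0:ℝ) ≤ ∑ i, (layer σ (z n) x L i - f x i) ^ 2 :=
      Finset.sum_nonneg fun i _ => sq_nonneg _
    rw [Real.norm_eq_abs, abs_of_nonneg h3]
    linarith
  · refine Eventually.of_forall fun x => ?_
    have hcont : Continuous (fun θ' : Params L ℓ =>
        ∑ i, (layer σ θ' x L i - f x i) ^ 2) := by
      refine continuous_finset_sum _ fun i _ => ?_
      exact (((layer_cont σ hσ L i).comp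
        (Continuous.prodMk continuous_id continuous_const)).sub continuous_const).pow 2
    exact (hcont.tendsto θ).comp hz

noncomputable def replaceLast {m : ℕ} {ℓ : ℕ → ℕ} (z : Params (m+1) ℓ)
    (ξ : Fin (ℓ (m+1)) → ℝ) : Params (m+1) ℓ :=
  Function.update z ⟨m, Nat.lt_succ_self m⟩ (0, ξ)

lemma layer_congr {L : ℕ} {ℓ : ℕ → ℕ} (σ : ℕ → ℝ → ℝ) (z z' : Params L ℓ)
    (x : Fin (ℓ 0) → ℝ) : ∀ (k : ℕ), (∀ (k' : Fin L), k'.1 < k → z k' = z' k') →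
      layer σ z x k = layer σ z' x k
  | 0, _ => rfl
  | (k+1), h => by
      have hk : layer σ z x k = layer σ z' x k :=
        layer_congr σ z z' x k (fun k' hk' => h k' (Nat.lt_succ_of_lt hk'))
      funext i
      show biasOf z k i + ∑ j, weightOf z k i j * _ = biasOf z' k i + ∑ j, weightOf z' k i j * _
      by_cases hkL : k < L
      · have hz : z ⟨k, hkL⟩ = z' ⟨k, hkL⟩ := h ⟨k, hkL⟩ (Nat.lt_succ_self k)
        simp [biasOf, weightOf, hkL, hz, hk]
      · simp [biasOf, weightOf, hkL, hk]

lemma layer_segment {m : ℕ} {ℓ : ℕ → ℕ} (σ : ℕ → ℝ → ℝ) (z : Params (m+1) ℓ)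
    (ξ : Fin (ℓ (m+1)) → ℝ) (t : ℝ) (x : Fin (ℓ 0) → ℝ) (i : Fin (ℓ (m+1))) :
    layer σ (z + t • (replaceLast z ξ - z)) x (m+1) i
      = (1-t) * layer σ z x (m+1) i + t * ξ i := by
  set zt := z + t • (replaceLast z ξ - z) with hzt
  have hlow : layer σ zt x m = layer σ z x m := by
    refine layer_congr σ _ _ x m (fun k' hk' => ?_)
    have hne : k' ≠ ⟨m, Nat.lt_succ_self m⟩ := by
      intro h; rw [h] at hk'; exact lt_irrefl m hk'
    have : replaceLast z ξ k' = z k' := Function.update_of_ne hne _ z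
    simp [hzt, this]
  have hmlt : m < m + 1 := Nat.lt_succ_self m
  have hupd : replaceLast z ξ ⟨m, hmlt⟩ = (0, ξ) := Function.update_self _ _ _
  have hW : ∀ j, weightOf zt m i j = (1-t) * weightOf z m i j := by
    intro j
    simp only [weightOf, dif_pos hmlt, hzt, Pi.add_apply, Pi.smul_apply, Pi.sub_apply, hupd]
    simp [Prod.fst_add, Prod.smul_fst, Prod.fst_sub]
    ring
  have hB : biasOf zt m i = (1-t) * biasOf z m i + t * ξ i := by
    simp only [biasOf, dif_pos hmlt, hzt, Pi.add_apply, Pi.smul_apply, Pi.sub_apply, hupd]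
    simp [Prod.snd_add, Prod.smul_snd, Prod.snd_sub]
    ring
  show biasOf zt m i + ∑ j, weightOf zt m i j *
      (if m = 0 then layer σ zt x m j else σ m (layer σ zt x m j))
    = (1-t) * (biasOf z m i + ∑ j, weightOf z m i j *
      (if m = 0 then layer σ z x m j else σ m (layer σ z x m j))) + t * ξ i
  rw [hlow, hB]
  rw [Finset.sum_congr rfl (fun j _ => by rw [hW j])]
  rw [mul_add, Finset.mul_sum]
  ring_nf

lemma layer_replaceLast {m : ℕ} {ℓ : ℕ → ℕ} (σ : ℕ → ℝ → ℝ) (z : Params (m+1) ℓ)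
    (ξ : Fin (ℓ (m+1)) → ℝ) (x : Fin (ℓ 0) → ℝ) (i : Fin (ℓ (m+1))) :
    layer σ (replaceLast z ξ) x (m+1) i = ξ i := by
  have h : replaceLast z ξ = z + (1:ℝ) • (replaceLast z ξ - z) := by
    rw [one_smul, add_sub_cancel]
  rw [h, layer_segment]; ring

lemma risk_segment_le {m : ℕ} {ℓ : ℕ → ℕ} {a b : ℝ} (σ : ℕ → ℝ → ℝ)
    (hσ : ∀ n, Continuous (σ n)) {μ : Measure (Fin (ℓ 0) → ℝ)} [IsFiniteMeasure μ]
    {f : (Fin (ℓ 0) → ℝ) → (Fin (ℓ (m+1)) → ℝ)} (hf : Measurable f)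
    (hf2 : Integrable (fun x => ∑ i, (f x i) ^ 2)
      (μ.restrict (Set.Icc (fun _ => a) (fun _ => b))))
    (z : Params (m+1) ℓ) (ξ : Fin (ℓ (m+1)) → ℝ) (t : ℝ) (ht0 : 0 ≤ t) (ht1 : t ≤ 1) :
    drisk (m+1) ℓ a b σ μ f (z + t • (replaceLast z ξ - z))
      ≤ (1-t) * drisk (m+1) ℓ a b σ μ f z
        + t * ∫ x in Set.Icc ((fun _ => a) : Fin (ℓ 0) → ℝ) (fun _ => b),
            (∑ i, (ξ i - f x i) ^ 2) ∂μ := by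
  have hξint : Integrable (fun x => ∑ i, (ξ i - f x i) ^ 2)
      (μ.restrict (Set.Icc (fun _ => a) (fun _ => b))) := by
    refine (risk_integrable σ hσ hf hf2 (replaceLast z ξ)).congr ?_
    exact Eventually.of_forall fun x => by
      simp [layer_replaceLast σ z ξ x]
  have hzint := risk_integrable σ hσ hf hf2 z
  have hztint := risk_integrable σ hσ hf hf2 (z + t • (replaceLast z ξ - z))
  unfold drisk
  have hmono : ∀ x, ∑ i, (layer σ (z + t • (replaceLast z ξ - z)) x (m+1) i - f x i) ^ 2
      ≤ (1-t) * (∑ i, (layer σ z x (m+1) i - f x i) ^ 2)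
        + t * (∑ i, (ξ i - f x i) ^ 2) := by
    intro x
    rw [Finset.mul_sum, Finset.mul_sum, ← Finset.sum_add_distrib]
    refine Finset.sum_le_sum fun i _ => ?_
    rw [layer_segment]
    have hA : (1-t) * layer σ z x (m+1) i + t * ξ i - f x i
        = (1-t) * (layer σ z x (m+1) i - f x i) + t * (ξ i - f x i) := by ring
    rw [hA]
    nlinarith [sq_nonneg ((layer σ z x (m+1) i - f x i) - (ξ i - f x i)), mul_nonneg ht0 (sub_nonneg.2 ht1)]
  calc ∫ x in Set.Icc ((fun _ => a) : Fin (ℓ 0) → ℝ) (fun _ => b),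
        (∑ i, (layer σ (z + t • (replaceLast z ξ - z)) x (m+1) i - f x i) ^ 2) ∂μ
      ≤ ∫ x in Set.Icc ((fun _ => a) : Fin (ℓ 0) → ℝ) (fun _ => b),
          ((1-t) * (∑ i, (layer σ z x (m+1) i - f x i) ^ 2)
            + t * (∑ i, (ξ i - f x i) ^ 2)) ∂μ :=
        integral_mono hztint ((hzint.const_mul (1-t)).add (hξint.const_mul t))
          (fun x => hmono x)
    _ = _ := by
        rw [integral_add (hzint.const_mul (1-t)) (hξint.const_mul t),
          integral_const_mul, integral_const_mul]

/-- At every Clarke critical point of the risk of a deep ANN with locally Lipschitz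
activation, the risk is bounded by the best constant approximation error. -/
theorem stmt6 (L : ℕ) (hL : 0 < L) (ℓ : ℕ → ℕ) (hℓ : ∀ k, 0 < ℓ k)
    (a b : ℝ) (hab : a < b) (σ : ℝ → ℝ) (hσ : LocallyLipschitz σ)
    (μ : Measure (Fin (ℓ 0) → ℝ)) [IsFiniteMeasure μ]
    (f : (Fin (ℓ 0) → ℝ) → (Fin (ℓ L) → ℝ)) (hf : Measurable f)
    (hf2 : Integrable (fun x => ∑ i, (f x i) ^ 2)
      (μ.restrict (Set.Icc (fun _ => a) (fun _ => b))))
    (θ : Params L ℓ)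
    (hθ : (0 : Params L ℓ →L[ℝ] ℝ) ∈ clarkeSubdiff (drisk L ℓ a b (fun _ => σ) μ f) θ) :
    drisk L ℓ a b (fun _ => σ) μ f θ ≤
      ⨅ ξ : Fin (ℓ L) → ℝ,
        ∫ x in Set.Icc ((fun _ => a) : Fin (ℓ 0) → ℝ) (fun _ => b),
          (∑ i, (f x i - ξ i) ^ 2) ∂μ := by
  obtain ⟨m, rfl⟩ := Nat.exists_eq_succ_of_ne_zero hL.ne'
  have hσc : ∀ n : ℕ, Continuous ((fun _ => σ : ℕ → ℝ → ℝ) n) := fun _ => hσ.continuous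
  set σ' : ℕ → ℝ → ℝ := fun _ => σ with hσ'
  set R : Params (m+1) ℓ → ℝ := drisk (m+1) ℓ a b σ' μ f with hR
  -- the best constant approximation value for ξ
  set Cξ : (Fin (ℓ (m+1)) → ℝ) → ℝ := fun ξ =>
    ∫ x in Set.Icc ((fun _ => a) : Fin (ℓ 0) → ℝ) (fun _ => b),
      (∑ i, (ξ i - f x i) ^ 2) ∂μ with hCξ
  -- Step A : for every ξ, R θ ≤ Cξ ξ
  have stepA : ∀ ξ : Fin (ℓ (m+1)) → ℝ, R θ ≤ Cξ ξ := by
    intro ξ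
    -- (★) at differentiability points
    have hstar : ∀ w : Params (m+1) ℓ, DifferentiableAt ℝ R w →
        R w + fderiv ℝ R w (replaceLast w ξ - w) ≤ Cξ ξ := by
      intro w hw
      set v : Params (m+1) ℓ := replaceLast w ξ - w with hv
      set φ : ℝ → ℝ := fun t => R (w + t • v) with hφ
      have hφ0 : φ 0 = R w := by simp [hφ]
      have hd : HasDerivAt φ (fderiv ℝ R w v) 0 := by
        have hline : HasDerivAt (fun t : ℝ => w + t • v) v 0 := by
          simpa using ((hasDerivAt_id (0:ℝ)).smul_const v).const_add w
        have hF : HasFDerivAt R (fderiv ℝ R w) (w + (0:ℝ) • v) := by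
          simpa using hw.hasFDerivAt
        exact hF.comp_hasDerivAt 0 hline
      have hslope : ∀ t ∈ Set.Ioc (0:ℝ) 1, slope φ 0 t ≤ Cξ ξ - R w := by
        intro t ht
        have h1 := risk_segment_le σ' hσc hf hf2 w ξ t ht.1.le ht.2
        have h2 : φ t ≤ (1-t) * R w + t * Cξ ξ := h1
        rw [slope_def_field, sub_zero, hφ0, div_le_iff₀ ht.1]
        nlinarith
      have htend : Tendsto (slope φ 0) (𝓝[>] (0:ℝ)) (𝓝 (fderiv ℝ R w v)) :=
        ((hasDerivAt_iff_tendsto_slope).1 hd).mono_left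
          (nhdsWithin_mono 0 fun t ht => ne_of_gt ht)
      have hle : fderiv ℝ R w v ≤ Cξ ξ - R w := by
        refine le_of_tendsto htend ?_
        filter_upwards [Ioc_mem_nhdsGT_of_mem (Set.mem_Ico.2 ⟨le_refl (0:ℝ), one_pos⟩)]
          with t ht using hslope t ht
      linarith
    -- pass to limits of gradients
    have hS : ∀ y ∈ {y : Params (m+1) ℓ →L[ℝ] ℝ | ∃ z : ℕ → Params (m+1) ℓ,
        (∀ k, DifferentiableAt ℝ R (z k)) ∧ Tendsto z atTop (𝓝 θ) ∧
        Tendsto (fun k => fderiv ℝ R (z k)) atTop (𝓝 y)},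
        R θ + y (replaceLast θ ξ - θ) ≤ Cξ ξ := by
      rintro y ⟨z, hdiff, hz, hy⟩
      have hR_tend : Tendsto (fun n => R (z n)) atTop (𝓝 (R θ)) :=
        risk_tendsto σ' hσc hf hf2 θ z hz
      have hrepl_cont : Continuous (fun w : Params (m+1) ℓ => replaceLast w ξ - w) := by
        refine Continuous.sub ?_ continuous_id
        refine continuous_pi fun k => ?_
        by_cases hk : k = ⟨m, Nat.lt_succ_self m⟩
        · subst hk
          simp only [replaceLast]
          have : (fun w : Params (m+1) ℓ => Function.update w ⟨m, Nat.lt_succ_self m⟩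
              ((0, ξ)) ⟨m, Nat.lt_succ_self m⟩) = fun _ => (0, ξ) := by
            funext w; exact Function.update_self _ _ _
          rw [this]; exact continuous_const
        · simp only [replaceLast]
          have : (fun w : Params (m+1) ℓ => Function.update w ⟨m, Nat.lt_succ_self m⟩
              ((0, ξ)) k) = fun w => w k := by
            funext w; exact Function.update_of_ne hk _ _
          rw [this]; exact continuous_apply k
      have hv_tend : Tendsto (fun n => replaceLast (z n) ξ - z n) atTop
          (𝓝 (replaceLast θ ξ - θ)) := (hrepl_cont.tendsto θ).comp hz
      have happ : Tendsto (fun n => (fderiv ℝ R (z n)) (replaceLast (z n) ξ - z n))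
          atTop (𝓝 (y (replaceLast θ ξ - θ))) := by
        have hc : Continuous (fun p : (Params (m+1) ℓ →L[ℝ] ℝ) × Params (m+1) ℓ =>
            p.1 p.2) := isBoundedBilinearMap_apply.continuous
        exact (hc.tendsto (y, replaceLast θ ξ - θ)).comp (hy.prodMk_nhds hv_tend)
      refine le_of_tendsto (hR_tend.add happ) ?_
      exact Eventually.of_forall fun n => hstar (z n) (hdiff n)
    -- convexity of the half space and the hull argument
    have hT : Convex ℝ {y : Params (m+1) ℓ →L[ℝ] ℝ |
        R θ + y (replaceLast θ ξ - θ) ≤ Cξ ξ} := by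
      rintro y1 h1 y2 h2 p q hp hq hpq
      simp only [Set.mem_setOf_eq, ContinuousLinearMap.add_apply,
        ContinuousLinearMap.coe_smul', Pi.smul_apply, smul_eq_mul] at *
      calc R θ + (p * y1 (replaceLast θ ξ - θ) + q * y2 (replaceLast θ ξ - θ))
          = p * (R θ + y1 (replaceLast θ ξ - θ))
            + q * (R θ + y2 (replaceLast θ ξ - θ)) := by linear_combination (-(R θ)) * hpq
        _ ≤ p * Cξ ξ + q * Cξ ξ :=
            add_le_add (mul_le_mul_of_nonneg_left h1 hp) (mul_le_mul_of_nonneg_left h2 hq)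
        _ = Cξ ξ := by linear_combination (Cξ ξ) * hpq
    have h0 : (0 : Params (m+1) ℓ →L[ℝ] ℝ) ∈ {y : Params (m+1) ℓ →L[ℝ] ℝ |
        R θ + y (replaceLast θ ξ - θ) ≤ Cξ ξ} :=
      convexHull_min hS hT hθ
    simpa using h0
  -- Step B : pass to the infimum
  have hCC : ∀ ξ : Fin (ℓ (m+1)) → ℝ, Cξ ξ =
      ∫ x in Set.Icc ((fun _ => a) : Fin (ℓ 0) → ℝ) (fun _ => b),
        (∑ i, (f x i - ξ i) ^ 2) ∂μ := by
    intro ξ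
    simp only [hCξ]
    congr 1
    funext x
    exact Finset.sum_congr rfl fun i _ => by ring
  refine le_ciInf fun ξ => ?_
  rw [← hCC ξ]
  exact stepA ξ
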